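/- arXiv:2108.03681 — 2 statements merged into one kernel-verified Lean document; each statement's English description precedes it below -/
import Mathlib

section
/- Let V be a Hilbert space and {V_h} a family of closed subspaces such that ‖(I − p_h)w‖_V → 0 as h → 0 for every w ∈ V, where p_h is the orthogonal projection onto V_h. Fix λ and let B(λ), B_h(λ) be as in the Galerkin setting. Then for every fixed v ∈ V (in particular for v in any fixed V_{h₀}), ‖(F(λ) − F_h(λ)) p_h v‖_V → 0 as h → 0, where F(λ) = I − B(λ) and F_h(λ) = I_h − B_h(λ). -/
/-!
The Galerkin operator is the compression of `B` to `V_n`: `B_n u = p_n (B u)` for `u ∈ V_n`, since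
both represent `b(u, ·)` on `V_n`. Hence `(F - F_n) p_n v = -(I - p_n) B p_n v`, and writing
`B p_n v = B v - B (v - p_n v)` with `‖I - p_n‖ ≤ 1` bounds its norm by
`‖(I - p_n) B v‖ + ‖B‖ ‖v - p_n v‖`, which tends to `0` by the pointwise approximation
property.
-/

open Filter Topology

namespace Submodule

variable {𝕜 E : Type*} [RCLike 𝕜] [NormedAddCommGroup E] [InnerProductSpace 𝕜 E]

theorem coe_apply_eq_starProjection_of_inner_eq (K : Submodule 𝕜 E) [K.HasOrthogonalProjection]
    {A : E →L[𝕜] E} {A_K : K →L[𝕜] K}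
    (h : ∀ u w : K, inner 𝕜 (A_K u : E) (w : E) = inner 𝕜 (A u) (w : E)) (u : K) :
    (A_K u : E) = K.starProjection (A u) :=
  (eq_starProjection_of_mem_of_inner_eq_zero (A_K u).2 fun w hw => by
    rw [inner_sub_left, ← h u ⟨w, hw⟩, sub_self]).symm

theorem norm_sub_starProjection_apply_starProjection_le (K : Submodule 𝕜 E)
    [K.HasOrthogonalProjection] (A : E →L[𝕜] E) (v : E) :
    ‖A (K.starProjection v) - K.starProjection (A (K.starProjection v))‖
      ≤ ‖A v - K.starProjection (A v)‖ + ‖A‖ * ‖v - K.starProjection v‖ := by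
  set P := K.starProjection
  set Q := Kᗮ.starProjection
  have hQ : ∀ w, w - P w = Q w := fun w => (starProjection_orthogonal_val w).symm
  calc ‖A (P v) - P (A (P v))‖ = ‖Q (A v) - Q (A (v - P v))‖ := by
        rw [hQ, map_sub A, map_sub Q, sub_sub_cancel]
    _ ≤ ‖Q (A v)‖ + ‖Q (A (v - P v))‖ := norm_sub_le _ _
    _ ≤ ‖Q (A v)‖ + ‖A (v - P v)‖ := by gcongr; exact norm_starProjection_apply_le _ _
    _ ≤ ‖A v - P (A v)‖ + ‖A‖ * ‖v - P v‖ := by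
        rw [hQ (A v)]; gcongr; exact A.le_opNorm _

theorem tendsto_norm_sub_starProjection_apply_starProjection {ι : Type*} {l : Filter ι}
    {K : ι → Submodule 𝕜 E} [∀ i, (K i).HasOrthogonalProjection]
    (hK : ∀ w, Tendsto (fun i => ‖w - (K i).starProjection w‖) l (𝓝 0))
    (A : E →L[𝕜] E) (v : E) :
    Tendsto (fun i =>
        ‖A ((K i).starProjection v) - (K i).starProjection (A ((K i).starProjection v))‖)
      l (𝓝 0) := by
  have hlim := (hK (A v)).add ((hK v).const_mul ‖A‖)
  rw [mul_zero, add_zero] at hlim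
  exact squeeze_zero (fun _ => norm_nonneg _)
    (fun i => norm_sub_starProjection_apply_starProjection_le (K i) A v) hlim

end Submodule

local notation "⟪" x ", " y "⟫" => @inner ℂ _ _ x y

/-- The limit `h → 0` is taken along a sequence of subspaces `V_n`. -/
theorem stmt8_general
    (V : Type*) [NormedAddCommGroup V] [InnerProductSpace ℂ V] [CompleteSpace V]
    (Vn : ℕ → Submodule ℂ V) [∀ n, CompleteSpace (Vn n)]
    (happrox : ∀ w : V,
      Tendsto (fun n => ‖w - ((Submodule.orthogonalProjectionOnto (Vn n) w : Vn n) : V)‖) atTop (nhds 0))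
    (b : V → V → ℂ)
    (B : V →L[ℂ] V) (hB : ∀ u v : V, ⟪B u, v⟫ = b u v)
    (Bn : ∀ n, Vn n →L[ℂ] Vn n)
    (hBn : ∀ n, ∀ u v : Vn n, ⟪((Bn n u : Vn n) : V), (v : V)⟫ = b (u : V) (v : V)) :
    ∀ v : V,
      Tendsto (fun n =>
        ‖(ContinuousLinearMap.id ℂ V - B) ((Submodule.orthogonalProjectionOnto (Vn n) v : Vn n) : V) -
          (((ContinuousLinearMap.id ℂ (Vn n) - Bn n)
              (Submodule.orthogonalProjectionOnto (Vn n) v) : Vn n) : V)‖) atTop (nhds 0) := by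
  intro v
  have hBn_eq (n : ℕ) (u : Vn n) : (Bn n u : V) = (Vn n).starProjection (B u) :=
    (Vn n).coe_apply_eq_starProjection_of_inner_eq (fun u w => by rw [hBn, hB]) u
  refine (Submodule.tendsto_norm_sub_starProjection_apply_starProjection happrox B v).congr
    fun n => ?_
  rw [← norm_neg]
  simp only [sub_apply, ContinuousLinearMap.id_apply, Submodule.coe_sub,
    hBn_eq, ← Submodule.starProjection_apply]
  congr 1
  abel

/-- Pointwise approximation `‖(F(λ) − F_h(λ)) p_h v‖_V → 0` as `h → 0`
(the family of subspaces is realized as a sequence `V_n` with orthogonal projections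
`p_n` converging strongly to the identity), where `F(λ) = I − B(λ)`,
`F_n(λ) = I_n − B_n(λ)` and `B(λ)`, `B_n(λ)` are the Riesz representatives of a fixed
bounded sesquilinear form `b(·,·;λ)` on `V` and `V_n`. -/
theorem stmt8
    (V : Type*) [NormedAddCommGroup V] [InnerProductSpace ℂ V] [CompleteSpace V]
    (Vn : ℕ → Submodule ℂ V) [∀ n, CompleteSpace (Vn n)]
    (happrox : ∀ w : V,
      Tendsto (fun n => ‖w - ((Submodule.orthogonalProjectionOnto (Vn n) w : Vn n) : V)‖) atTop (nhds 0))
    (b : V → V → ℂ)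
    (Cb : ℝ) (hbnd : ∀ u v : V, ‖b u v‖ ≤ Cb * ‖u‖ * ‖v‖)
    (B : V →L[ℂ] V) (hB : ∀ u v : V, ⟪B u, v⟫ = b u v)
    (Bn : ∀ n, Vn n →L[ℂ] Vn n)
    (hBn : ∀ n, ∀ u v : Vn n, ⟪((Bn n u : Vn n) : V), (v : V)⟫ = b (u : V) (v : V)) :
    ∀ v : V,
      Tendsto (fun n =>
        ‖(ContinuousLinearMap.id ℂ V - B) ((Submodule.orthogonalProjectionOnto (Vn n) v : Vn n) : V) -
          (((ContinuousLinearMap.id ℂ (Vn n) - Bn n)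
              (Submodule.orthogonalProjectionOnto (Vn n) v) : Vn n) : V)‖) atTop (nhds 0) :=
  stmt8_general V Vn happrox b B hB Bn hBn
end

section
/- Regularity at resolvent points: Let V be a Hilbert space, V_n ⊂ V closed subspaces with orthogonal projections p_n satisfying ‖(I−p_n)w‖ → 0 for all w ∈ V. Suppose F(λ) ∈ L(V) is boundedly invertible, and F_n(λ) ∈ L(V_n) satisfy (i) ‖(F(λ) − F_n(λ)) w_n‖ → 0 uniformly on bounded sets of the form {v_n − p_n v}, and (ii) ‖p_n F(λ)v − F_n(λ) p_n v‖ → 0 for every v ∈ V. If v_n ∈ V_n is a bounded sequence with ‖F_n(λ) v_n − p_n y‖ → 0 for some y ∈ V, then setting v = F(λ)^{-1} y one has ‖v_n − p_n v‖ → 0. -/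
/-!
Put `u = F⁻¹ y`. The chain `F vₙ ≈ Fₙ vₙ ≈ pₙ y = pₙ F u ≈ Fₙ pₙ u ≈ F pₙ u`, whose links are
consistency (i) for the bounded sequences `vₙ` and `pₙ u`, the hypothesis on `vₙ`, and
consistency (ii) at `u`, gives `‖F (vₙ - pₙ u)‖ → 0`; bounded invertibility of `F` then gives
`‖vₙ - pₙ u‖ → 0`.
-/

open Filter Topology

theorem tendsto_norm_sub_trans {ι E : Type*} [SeminormedAddCommGroup E] {l : Filter ι}
    {a b c : ι → E} (hab : Tendsto (fun i => ‖a i - b i‖) l (𝓝 0))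
    (hbc : Tendsto (fun i => ‖b i - c i‖) l (𝓝 0)) :
    Tendsto (fun i => ‖a i - c i‖) l (𝓝 0) := by
  refine squeeze_zero (fun _ => norm_nonneg _) (fun i => ?_) (by simpa using hab.add hbc)
  exact norm_sub_le_norm_sub_add_norm_sub _ _ _

theorem tendsto_norm_sub_of_leftInverse {ι 𝕜 E F : Type*} [NontriviallyNormedField 𝕜]
    [SeminormedAddCommGroup E] [NormedSpace 𝕜 E] [SeminormedAddCommGroup F] [NormedSpace 𝕜 F]
    {l : Filter ι} {T : E →L[𝕜] F} {G : F →L[𝕜] E} (hGT : Function.LeftInverse G T)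
    {a b : ι → E} (h : Tendsto (fun i => ‖T (a i) - T (b i)‖) l (𝓝 0)) :
    Tendsto (fun i => ‖a i - b i‖) l (𝓝 0) := by
  refine squeeze_zero (fun _ => norm_nonneg _) (fun i => ?_) (by simpa using h.const_mul ‖G‖)
  calc ‖a i - b i‖ = ‖G (T (a i) - T (b i))‖ := by rw [map_sub, hGT, hGT]
    _ ≤ ‖G‖ * ‖T (a i) - T (b i)‖ := G.le_opNorm _

theorem stmt11_general
    (V : Type*) [NormedAddCommGroup V] [InnerProductSpace ℂ V]
    (Vn : ℕ → Submodule ℂ V) [∀ n, CompleteSpace (Vn n)]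
    (F Finv : V →L[ℂ] V)
    (hFinv₁ : ∀ x : V, Finv (F x) = x) (hFinv₂ : ∀ x : V, F (Finv x) = x)
    (Fn : ∀ n, Vn n →L[ℂ] Vn n)
    (hconsist₁ : ∀ w : ∀ n, Vn n, (∃ M : ℝ, ∀ n, ‖((w n : Vn n) : V)‖ ≤ M) →
      Tendsto (fun n => ‖F ((w n : Vn n) : V) - ((Fn n (w n) : Vn n) : V)‖) atTop (nhds 0))
    (hconsist₂ : ∀ v : V,
      Tendsto (fun n =>
        ‖(((Vn n).orthogonalProjectionOnto (F v) : Vn n) : V) -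
          ((Fn n ((Vn n).orthogonalProjectionOnto v) : Vn n) : V)‖) atTop (nhds 0))
    (v : ∀ n, Vn n) (hvbdd : ∃ M : ℝ, ∀ n, ‖((v n : Vn n) : V)‖ ≤ M)
    (y : V)
    (hFn : Tendsto (fun n =>
      ‖((Fn n (v n) : Vn n) : V) - (((Vn n).orthogonalProjectionOnto y : Vn n) : V)‖)
      atTop (nhds 0)) :
    Tendsto (fun n =>
      ‖((v n : Vn n) : V) - (((Vn n).orthogonalProjectionOnto (Finv y) : Vn n) : V)‖)
      atTop (nhds 0) := by
  set pu : ∀ n, Vn n := fun n => (Vn n).orthogonalProjectionOnto (Finv y)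
  have hpu_bdd : ∃ M : ℝ, ∀ n, ‖((pu n : Vn n) : V)‖ ≤ M :=
    ⟨‖Finv y‖, fun n => (Vn n).norm_orthogonalProjectionOnto_apply_le _⟩
  have hFpu : Tendsto (fun n => ‖((Fn n (pu n) : Vn n) : V) - F (pu n)‖) atTop (𝓝 0) := by
    simpa only [norm_sub_rev] using hconsist₁ pu hpu_bdd
  have hproj : Tendsto (fun n =>
      ‖(((Vn n).orthogonalProjectionOnto y : Vn n) : V) - ((Fn n (pu n) : Vn n) : V)‖)
      atTop (𝓝 0) := by
    simpa only [hFinv₂] using hconsist₂ (Finv y)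
  refine tendsto_norm_sub_of_leftInverse (T := F) (G := Finv) hFinv₁ ?_
  exact tendsto_norm_sub_trans (hconsist₁ v hvbdd)
    (tendsto_norm_sub_trans hFn (tendsto_norm_sub_trans hproj hFpu))

/-- Regularity at resolvent points.  `V` Hilbert, `V_n` closed subspaces
with orthogonal projections `p_n` converging strongly to the identity, `F(λ)` boundedly
invertible with inverse `Finv`, `F_n(λ)` consistent approximations:
(i) `‖(F(λ) − F_n(λ)) w_n‖ → 0` for every bounded sequence `w_n ∈ V_n`, and
(ii) `‖p_n F(λ)v − F_n(λ) p_n v‖ → 0` for every `v ∈ V`.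
If `v_n ∈ V_n` is bounded and `‖F_n(λ)v_n − p_n y‖ → 0`, then with `v = F(λ)⁻¹ y` one
has `‖v_n − p_n v‖ → 0`. -/
theorem stmt11
    (V : Type*) [NormedAddCommGroup V] [InnerProductSpace ℂ V] [CompleteSpace V]
    (Vn : ℕ → Submodule ℂ V) [∀ n, CompleteSpace (Vn n)]
    (happrox : ∀ w : V,
      Tendsto (fun n => ‖w - (((Vn n).orthogonalProjectionOnto w : Vn n) : V)‖) atTop (nhds 0))
    (F Finv : V →L[ℂ] V)
    (hFinv₁ : ∀ x : V, Finv (F x) = x) (hFinv₂ : ∀ x : V, F (Finv x) = x)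
    (Fn : ∀ n, Vn n →L[ℂ] Vn n)
    (hconsist₁ : ∀ w : ∀ n, Vn n, (∃ M : ℝ, ∀ n, ‖((w n : Vn n) : V)‖ ≤ M) →
      Tendsto (fun n => ‖F ((w n : Vn n) : V) - ((Fn n (w n) : Vn n) : V)‖) atTop (nhds 0))
    (hconsist₂ : ∀ v : V,
      Tendsto (fun n =>
        ‖(((Vn n).orthogonalProjectionOnto (F v) : Vn n) : V) -
          ((Fn n ((Vn n).orthogonalProjectionOnto v) : Vn n) : V)‖) atTop (nhds 0))
    (v : ∀ n, Vn n) (hvbdd : ∃ M : ℝ, ∀ n, ‖((v n : Vn n) : V)‖ ≤ M)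
    (y : V)
    (hFn : Tendsto (fun n =>
      ‖((Fn n (v n) : Vn n) : V) - (((Vn n).orthogonalProjectionOnto y : Vn n) : V)‖)
      atTop (nhds 0)) :
    Tendsto (fun n =>
      ‖((v n : Vn n) : V) - (((Vn n).orthogonalProjectionOnto (Finv y) : Vn n) : V)‖)
      atTop (nhds 0) :=
  stmt11_general V Vn F Finv hFinv₁ hFinv₂ Fn hconsist₁ hconsist₂ v hvbdd y hFn
end
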